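/- Let β ∈ (0, 1/2) with β ≠ 1/3 and set c = cos(2πβ). Then a(β) ∈ (0, π/2), and for every n ∈ ℕ and every ω ∈ [nπ/L, (n+1)π/L] one has g_β(ω) < −2 if and only if ω ∈ Ĩⁿ(β). Moreover ωₙ* = (2n+1)π/(2L) belongs to Ĩⁿ(β). -/

import Mathlib

open Real

/-!
With `t = cos (πβ) > 0` the half-angle formula gives `√(2 + 2c) = 2t`, hence
`3 + 2c − 2√(2 + 2c) = (2t − 1)²` and `cos a(β) = |2t − 1| / 3`. Multiplying out, `g_β(ω) < −2`
becomes `9 cos² (ωL) < (2t − 1)²`, i.e. `|cos (ωL)| < cos a(β)`, and on each half-period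
`[nπ, (n+1)π]` this carves out exactly `(nπ + a, (n+1)π − a)`. The exclusion `β ≠ 1/3`
is `t ≠ 1/2`, which keeps `a(β)` below `π/2`.
-/

noncomputable def L : ℝ := 1 / Real.sqrt 3

noncomputable def g (β ω : ℝ) : ℝ :=
  (9 * Real.cos (ω * L) ^ 2 - 3 - 2 * Real.cos (2 * π * β)) /
    Real.sqrt (2 + 2 * Real.cos (2 * π * β))

noncomputable def aβ (β : ℝ) : ℝ :=
  Real.arccos (Real.sqrt (3 + 2 * Real.cos (2 * π * β) -
    2 * Real.sqrt (2 + 2 * Real.cos (2 * π * β))) / 3)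

noncomputable def Itilde (β : ℝ) (n : ℕ) : Set ℝ :=
  Set.Ioo (n * π / L + aβ β / L) ((n + 1) * π / L - aβ β / L)

lemma abs_cos_lt_cos_iff {a y : ℝ} (ha : a ∈ Set.Icc 0 π) (hy : y ∈ Set.Icc 0 π) :
    |cos y| < cos a ↔ a < y ∧ y < π - a := by
  have hy' : π - y ∈ Set.Icc 0 π := ⟨by linarith [hy.2], by linarith [hy.1]⟩
  rw [abs_lt, neg_lt, ← cos_pi_sub, strictAntiOn_cos.lt_iff_gt hy' ha,
    strictAntiOn_cos.lt_iff_gt hy ha, and_comm]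
  constructor <;> rintro ⟨h₁, h₂⟩ <;> constructor <;> linarith

lemma abs_cos_lt_cos_iff_of_mem_Icc {a y : ℝ} (n : ℤ) (ha : a ∈ Set.Icc 0 π)
    (hy : y ∈ Set.Icc (n * π) ((n + 1) * π)) :
    |cos y| < cos a ↔ n * π + a < y ∧ y < (n + 1) * π - a := by
  have hy' : y - n * π ∈ Set.Icc 0 π := ⟨by linarith [hy.1], by linarith [hy.2]⟩
  have := abs_cos_lt_cos_iff ha hy'
  rw [cos_sub_int_mul_pi, abs_mul, abs_neg_one_zpow, one_mul] at this
  rw [this]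
  constructor <;> rintro ⟨h₁, h₂⟩ <;> constructor <;> linarith

lemma sqrt_two_add_two_cos_two_mul {θ : ℝ} (h : 0 ≤ cos θ) :
    √(2 + 2 * cos (2 * θ)) = 2 * cos θ := by
  rw [cos_two_mul, show 2 + 2 * (2 * cos θ ^ 2 - 1) = (2 * cos θ) ^ 2 by ring]
  exact sqrt_sq (by positivity)

lemma abs_two_mul_cos_sub_one_le {θ : ℝ} (h : 0 ≤ cos θ) : |2 * cos θ - 1| ≤ 1 :=
  abs_le.2 ⟨by linarith, by linarith [cos_le_one θ]⟩

lemma cos_pi_mul_ne_half {β : ℝ} (h₀ : 0 ≤ β) (h₁ : β ≤ 1) (h : β ≠ 1 / 3) :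
    cos (π * β) ≠ 1 / 2 := by
  intro he
  have hπ := pi_pos
  have hβπ := injOn_cos ⟨by positivity, by nlinarith⟩ ⟨by positivity, by linarith⟩
    (he.trans cos_pi_div_three.symm)
  exact h (by field_simp at hβπ; linarith)

lemma aβ_eq_arccos {β : ℝ} (h : 0 ≤ cos (π * β)) :
    aβ β = arccos (|2 * cos (π * β) - 1| / 3) := by
  rw [aβ, mul_assoc, sqrt_two_add_two_cos_two_mul h, cos_two_mul,
    show 3 + 2 * (2 * cos (π * β) ^ 2 - 1) - 2 * (2 * cos (π * β)) = (2 * cos (π * β) - 1) ^ 2 by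
      ring, sqrt_sq_eq_abs]

lemma cos_aβ {β : ℝ} (h : 0 ≤ cos (π * β)) : cos (aβ β) = |2 * cos (π * β) - 1| / 3 := by
  have hle := abs_two_mul_cos_sub_one_le h
  rw [aβ_eq_arccos h, cos_arccos (by linarith [abs_nonneg (2 * cos (π * β) - 1)]) (by linarith)]

lemma aβ_mem_Ioo {β : ℝ} (h₀ : 0 ≤ cos (π * β)) (h : cos (π * β) ≠ 1 / 2) :
    aβ β ∈ Set.Ioo 0 (π / 2) := by
  have hle := abs_two_mul_cos_sub_one_le h₀
  have hpos : 0 < |2 * cos (π * β) - 1| := abs_pos.2 fun h' => h (by linarith)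
  rw [aβ_eq_arccos h₀, Set.mem_Ioo, arccos_pos, arccos_lt_pi_div_two]
  constructor <;> linarith

lemma g_lt_neg_two_iff {β : ℝ} (ω : ℝ) (h : 0 < cos (π * β)) :
    g β ω < -2 ↔ |cos (ω * L)| < |2 * cos (π * β) - 1| / 3 := by
  have h3 : |cos (ω * L)| < |2 * cos (π * β) - 1| / 3 ↔
      (3 * cos (ω * L)) ^ 2 < (2 * cos (π * β) - 1) ^ 2 := by
    rw [sq_lt_sq, abs_mul, abs_of_pos (three_pos : (0 : ℝ) < 3), lt_div_iff₀ three_pos, mul_comm]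
  rw [h3, g, mul_assoc, sqrt_two_add_two_cos_two_mul h.le, cos_two_mul, div_lt_iff₀ (by positivity)]
  constructor <;> intro hlt <;> nlinarith

lemma L_pos : 0 < L := by unfold L; positivity

lemma mem_Itilde_iff {β ω : ℝ} {n : ℕ} :
    ω ∈ Itilde β n ↔ n * π + aβ β < ω * L ∧ ω * L < (n + 1) * π - aβ β := by
  rw [Itilde, Set.mem_Ioo, ← add_div, div_sub_div_same, div_lt_iff₀ L_pos, lt_div_iff₀ L_pos]

theorem stmt_9 (β : ℝ) (hβ0 : 0 < β) (hβ1 : β < 1 / 2) (hβ3 : β ≠ 1 / 3) (n : ℕ) :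
    aβ β ∈ Set.Ioo 0 (π / 2) ∧
    (∀ ω ∈ Set.Icc (n * π / L) ((n + 1) * π / L), (g β ω < -2 ↔ ω ∈ Itilde β n)) ∧
    (2 * n + 1) * π / (2 * L) ∈ Itilde β n := by
  have hπ := pi_pos
  have hcos : 0 < cos (π * β) := cos_pos_of_mem_Ioo ⟨by nlinarith, by nlinarith⟩
  have ha := aβ_mem_Ioo hcos.le (cos_pi_mul_ne_half hβ0.le (by linarith) hβ3)
  refine ⟨ha, fun ω hω => ?_, ?_⟩
  · have hωL : ω * L ∈ Set.Icc (((n : ℤ) : ℝ) * π) ((((n : ℤ) : ℝ) + 1) * π) := by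
      push_cast
      exact ⟨(div_le_iff₀ L_pos).1 hω.1, (le_div_iff₀ L_pos).1 hω.2⟩
    rw [g_lt_neg_two_iff ω hcos, ← cos_aβ hcos.le,
      abs_cos_lt_cos_iff_of_mem_Icc n ⟨ha.1.le, by linarith [ha.2]⟩ hωL, mem_Itilde_iff,
      Int.cast_natCast]
  · have hmid : (2 * n + 1) * π / (2 * L) * L = n * π + π / 2 := by
      field_simp [L_pos.ne']
    rw [mem_Itilde_iff, hmid]
    constructor <;> linarith [ha.2]
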